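/- arXiv:2208.13684 — 2 statements merged into one kernel-verified Lean document; each statement's English description precedes it below -/
import Mathlib

section
/- The monomial valuation attached to a closed ball computes the minimum of values over the ball: for K algebraically closed valued field, a ∈ K, δ ∈ Γ, and any polynomial f ∈ K[x], the monomial valuation ω_{a,δ}(f) = min_n (v(a_n) + nδ) (where f = Σ a_n (x-a)^n) satisfies ω_{a,δ}(f) = min { v(f(c)) : c ∈ K, v(c-a) ≥ δ }. -/
/-- The monomial valuation `ω_{a,δ}` attached to the closed ball `B(a,δ)` (radius `δ ∈ Γ`):
for `f = Σ aₙ (x-a)ⁿ`, `ω_{a,δ}(f) = minₙ (v(aₙ) + n·δ)`. -/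
noncomputable def omegaBall {K : Type*} [Field K] {Γ : Type*} [AddCommGroup Γ] [LinearOrder Γ] [IsOrderedAddMonoid Γ]
    (v : K → WithTop Γ) (a : K) (δ : Γ) (f : Polynomial K) : WithTop Γ :=
  (Finset.range (f.natDegree + 1)).inf fun n =>
    v ((f.comp (Polynomial.X + Polynomial.C a)).coeff n) + (↑(n • δ) : WithTop Γ)

/-!
Write `g = f(x + a) = Σ gₙ xⁿ`. The inequality `ω_{a,δ}(f) ≤ v(f(c))` on the ball is the
ultrametric inequality applied to `Σ gₙ (c - a)ⁿ`. For the reverse inequality factor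
`g = lc(g) · ∏ (x - r)` over its roots. The "Gauss norm" bound `ω_{0,δ}(p q) ≥ ω_{0,δ}(p) + ω_{0,δ}(q)`
gives `ω_{0,δ}(g) ≥ v(lc(g)) + Σ min(δ, v(r))`, and `v(g(t))` equals the right hand side as soon as
`v(t) ≥ δ` and `v(t - r) = min(δ, v(r))` for every root `r`. Such a `t = π y`, with `v(π) = δ`,
exists because `K` is algebraically closed: a root `y` of `x ∏ (x - r/π) - 1`, the product running
over the roots with `v(r) ≥ δ`, is integral and satisfies `y ∏ (y - r/π) = 1`, so every factor is
a unit.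
-/

open Polynomial Finset.HasAntidiagonal

namespace AddValuation

section Ring

variable {R Γ₀ : Type*} [Ring R] [LinearOrderedAddCommMonoidWithTop Γ₀] (v : AddValuation R Γ₀)

theorem le_map_coeff_mul_add_nsmul {p q : R[X]} {b c d : Γ₀}
    (hp : ∀ n, c ≤ v (p.coeff n) + n • b) (hq : ∀ n, d ≤ v (q.coeff n) + n • b) (n : ℕ) :
    c + d ≤ v ((p * q).coeff n) + n • b := by
  let term : ℕ × ℕ → R := fun ij => p.coeff ij.1 * q.coeff ij.2
  obtain ⟨ij, hij, hmin⟩ := (antidiagonal n).exists_mem_eq_inf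
    ⟨(n, 0), mem_antidiagonal.2 (add_zero n)⟩ fun ij => v (term ij)
  calc c + d ≤ (v (p.coeff ij.1) + ij.1 • b) + (v (q.coeff ij.2) + ij.2 • b) :=
        add_le_add (hp _) (hq _)
    _ = v (term ij) + n • b := by
        rw [v.map_mul, ← mem_antidiagonal.1 hij, add_nsmul]; abel
    _ ≤ v ((p * q).coeff n) + n • b := by
        rw [coeff_mul]
        exact add_le_add_left (v.map_le_sum fun k hk => hmin ▸ Finset.inf_le hk) _

theorem min_le_map_coeff_X_sub_C_add_nsmul (b : Γ₀) (r : R) (n : ℕ) :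
    min b (v r) ≤ v ((X - C r).coeff n) + n • b := by
  rcases n with _ | _ | n <;> simp [coeff_X, coeff_C]

end Ring

section CommRing

variable {R Γ₀ : Type*} [CommRing R] [LinearOrderedAddCommMonoidWithTop Γ₀] (v : AddValuation R Γ₀)

theorem map_multiset_prod (M : Multiset R) : v M.prod = (M.map v).sum := by
  induction M using Multiset.induction with
  | empty => simp
  | cons r M ih => simp [v.map_mul, ih]

theorem sum_min_le_map_coeff_prod_X_sub_C_add_nsmul (b : Γ₀) (M : Multiset R) (n : ℕ) :
    (M.map fun r => min b (v r)).sum ≤ v ((M.map fun r => X - C r).prod.coeff n) + n • b := by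
  induction M using Multiset.induction generalizing n with
  | empty => rcases n with _ | n <;> simp [coeff_one]
  | cons r M ih =>
    simpa using v.le_map_coeff_mul_add_nsmul (v.min_le_map_coeff_X_sub_C_add_nsmul b r) ih n

end CommRing

section WithTop

variable {Γ : Type*} [AddCommGroup Γ] [LinearOrder Γ] [IsOrderedAddMonoid Γ]

theorem zero_le_of_monic_of_isRoot {R : Type*} [Ring R] (v : AddValuation R (WithTop Γ))
    {p : R[X]} (hm : p.Monic) (hp : ∀ n, 0 ≤ v (p.coeff n)) {z : R} (hz : p.IsRoot z) :
    0 ≤ v z := by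
  by_contra! hneg
  obtain ⟨γ, hγ⟩ := WithTop.ne_top_iff_exists.1 (hneg.trans_le le_top).ne
  have hγ0 : γ < 0 := by rw [← hγ] at hneg; exact_mod_cast hneg
  set d := p.natDegree
  have hlow : v (z ^ d) < v (∑ i ∈ Finset.range d, p.coeff i * z ^ i) := by
    rw [v.map_pow, ← hγ, ← WithTop.coe_nsmul]
    refine v.map_lt_sum WithTop.coe_ne_top fun i hi => ?_
    have hdi : d • γ < i • γ := by
      simpa [neg_nsmul] using nsmul_lt_nsmul_left (neg_pos.2 hγ0) (Finset.mem_range.1 hi)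
    calc (↑(d • γ) : WithTop Γ) < ↑(i • γ) := WithTop.coe_lt_coe.2 hdi
      _ ≤ v (p.coeff i) + ↑(i • γ) := le_add_of_nonneg_left (hp i)
      _ = v (p.coeff i * z ^ i) := by rw [v.map_mul, v.map_pow, ← hγ, WithTop.coe_nsmul]
  have heval : p.eval z = z ^ d + ∑ i ∈ Finset.range d, p.coeff i * z ^ i := by
    rw [eval_eq_sum_range, Finset.sum_range_succ, hm.coeff_natDegree, one_mul, add_comm]
  have := v.map_add_eq_of_lt_left hlow
  rw [← heval, hz.eq_zero, v.map_zero, v.map_pow, ← hγ, ← WithTop.coe_nsmul] at this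
  exact WithTop.top_ne_coe this

variable {K : Type*} [Field K] (v : AddValuation K (WithTop Γ))

theorem exists_map_sub_eq_zero [IsAlgClosed K] {M : Multiset K} (hM : ∀ s ∈ M, 0 ≤ v s)
    (hM0 : M ≠ 0) :
    ∃ y, ∀ s ∈ M, v (y - s) = 0 := by
  set P := (M.map fun s => X - C s).prod
  have hPm : P.Monic := monic_multiset_prod_of_monic _ _ fun s _ => monic_X_sub_C s
  have hdeg : (1 : K[X]).degree < P.degree := by
    rw [degree_one, degree_eq_natDegree hPm.ne_zero, natDegree_multiset_prod_X_sub_C_eq_card]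
    exact_mod_cast Multiset.card_pos.2 hM0
  have hPcoeff (n : ℕ) : 0 ≤ v (P.coeff n) := by
    simpa [Multiset.map_congr rfl fun s hs => min_eq_left (hM s hs)] using
      v.sum_min_le_map_coeff_prod_X_sub_C_add_nsmul 0 M n
  have hQcoeff (n : ℕ) : 0 ≤ v ((P - 1).coeff n) := by
    rw [coeff_sub]
    exact v.map_le_sub (hPcoeff n) (by rcases n with _ | n <;> simp [coeff_one])
  obtain ⟨y, hy⟩ := IsAlgClosed.exists_root (P - 1) (by
    rw [degree_sub_eq_left_of_degree_lt hdeg]; exact (degree_one (R := K) ▸ hdeg).ne')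
  have hvy : 0 ≤ v y := v.zero_le_of_monic_of_isRoot (hPm.sub_of_left hdeg) hQcoeff hy
  have hnonneg : ∀ x ∈ M.map fun s => v (y - s), 0 ≤ x := by
    simp only [Multiset.mem_map]
    rintro _ ⟨s, hs, rfl⟩
    exact v.map_le_sub hvy (hM s hs)
  have hsum : (M.map fun s => v (y - s)).sum = 0 := by
    have hprod : (M.map fun s => y - s).prod = 1 := by
      simpa [P, eval_multiset_prod, sub_eq_zero] using hy
    rw [← v.map_one, ← hprod, v.map_multiset_prod, Multiset.map_map]
    rfl
  refine ⟨y, fun s hs => le_antisymm ?_ (hnonneg _ (Multiset.mem_map_of_mem _ hs))⟩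
  exact hsum ▸ Multiset.single_le_sum hnonneg _ (Multiset.mem_map_of_mem _ hs)

theorem exists_map_sub_eq_min [IsAlgClosed K] {π : K} (hπ : π ≠ 0) (R : Multiset K) :
    ∃ t, v π ≤ v t ∧ ∀ r ∈ R, v (t - r) = min (v π) (v r) := by
  have hdiv (r : K) : v r = v π + v (r / π) := by rw [← v.map_mul, mul_div_cancel₀ _ hπ]
  have hπtop : v π ≠ ⊤ := (ne_top_iff v).2 hπ
  obtain ⟨y, hy⟩ := v.exists_map_sub_eq_zero
    (M := 0 ::ₘ (R.map (· / π)).filter (0 ≤ v ·)) (by simp +contextual) Multiset.cons_ne_zero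
  have hvy : v y = 0 := by simpa using hy 0 (Multiset.mem_cons_self _ _)
  have hvt : v (π * y) = v π := by rw [v.map_mul, hvy, add_zero]
  refine ⟨π * y, hvt.ge, fun r hr => ?_⟩
  rcases le_or_gt (v π) (v r) with hle | hlt
  · have hr' : 0 ≤ v (r / π) := by
      rw [hdiv r] at hle
      exact (WithTop.add_le_add_iff_left hπtop).1 (by rwa [add_zero])
    have hyr : v (y - r / π) = 0 :=
      hy _ (Multiset.mem_cons_of_mem (Multiset.mem_filter.2 ⟨Multiset.mem_map_of_mem _ hr, hr'⟩))
    rw [min_eq_left hle, show π * y - r = π * (y - r / π) by field_simp, v.map_mul, hyr, add_zero]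
  · rw [min_eq_right hlt.le, v.map_sub_eq_of_lt_right (hvt ▸ hlt)]

variable (a : K) (δ : Γ) (f : K[X])

theorem omegaBall_le_map_eval {c : K} (hc : (δ : WithTop Γ) ≤ v (c - a)) :
    omegaBall v a δ f ≤ v (f.eval c) := by
  have hev : f.eval c = (f.comp (X + C a)).eval (c - a) := by simp
  rw [hev, eval_eq_sum_range, natDegree_comp, natDegree_X_add_C, mul_one]
  refine v.map_le_sum fun n hn => (Finset.inf_le hn).trans ?_
  rw [v.map_mul, v.map_pow, WithTop.coe_nsmul]
  gcongr

theorem exists_map_eval_eq_omegaBall [IsAlgClosed K] {π : K} (hπ : v π = δ) :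
    ∃ c, (δ : WithTop Γ) ≤ v (c - a) ∧ v (f.eval c) = omegaBall v a δ f := by
  set g := f.comp (X + C a)
  set c₀ := g.leadingCoeff
  set R := g.roots
  set P := (R.map fun r => X - C r).prod
  have hg : g = C c₀ * P := (IsAlgClosed.splits g).eq_prod_roots
  obtain ⟨t, hδt, ht⟩ := v.exists_map_sub_eq_min (π := π) (by rintro rfl; simp at hπ) R
  rw [hπ] at hδt ht
  have hval : v (f.eval (t + a)) = v c₀ + (R.map fun r => min ↑δ (v r)).sum := by
    have : f.eval (t + a) = c₀ * (R.map fun r => t - r).prod := by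
      rw [show f.eval (t + a) = g.eval t by simp [g], hg]
      simp [P, eval_multiset_prod, Multiset.map_map]
    rw [this, v.map_mul, v.map_multiset_prod, Multiset.map_map]
    exact congrArg _ (congrArg _ (Multiset.map_congr rfl ht))
  refine ⟨t + a, by simpa using hδt, le_antisymm ?_ (v.omegaBall_le_map_eval a δ f (by simpa))⟩
  refine Finset.le_inf fun n _ => ?_
  have hcoeff : g.coeff n = c₀ * P.coeff n := by rw [hg, coeff_C_mul]
  rw [hval, hcoeff, v.map_mul, add_assoc, WithTop.coe_nsmul]
  exact add_le_add_right (v.sum_min_le_map_coeff_prod_X_sub_C_add_nsmul _ _ n) _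

end WithTop

end AddValuation

theorem stmt_12_general {K : Type*} [Field K] [IsAlgClosed K] {Γ : Type*}
    [AddCommGroup Γ] [LinearOrder Γ] [IsOrderedAddMonoid Γ]
    (v : K → WithTop Γ)
    (hv0 : v 0 = ⊤) (hv1 : v 1 = 0)
    (hmul : ∀ x y : K, v (x * y) = v x + v y)
    (hadd : ∀ x y : K, min (v x) (v y) ≤ v (x + y))
    (hsurj : ∀ γ : Γ, ∃ x : K, v x = (γ : WithTop Γ))
    (a : K) (δ : Γ) (f : Polynomial K) :
    (∀ c : K, (δ : WithTop Γ) ≤ v (c - a) → omegaBall v a δ f ≤ v (f.eval c)) ∧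
    (∃ c : K, (δ : WithTop Γ) ≤ v (c - a) ∧ v (f.eval c) = omegaBall v a δ f) := by
  let w : AddValuation K (WithTop Γ) := .of v hv0 hv1 hadd hmul
  obtain ⟨π, hπ⟩ := hsurj δ
  exact ⟨fun c hc => w.omegaBall_le_map_eval a δ f hc, w.exists_map_eval_eq_omegaBall a δ f hπ⟩

/-- The monomial valuation attached to a closed ball computes the minimum of the values
over the ball: `ω_{a,δ}(f) = min {v(f(c)) : c ∈ B(a,δ)}`, the minimum being attained. -/
theorem stmt_12 {K : Type*} [Field K] [IsAlgClosed K] {Γ : Type*}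
    [AddCommGroup Γ] [LinearOrder Γ] [IsOrderedAddMonoid Γ]
    (v : K → WithTop Γ)
    (hv0 : v 0 = ⊤) (hv1 : v 1 = 0)
    (hmul : ∀ x y : K, v (x * y) = v x + v y)
    (hadd : ∀ x y : K, min (v x) (v y) ≤ v (x + y))
    (hsurj : ∀ γ : Γ, ∃ x : K, v x = (γ : WithTop Γ))
    (a : K) (δ : Γ) (f : Polynomial K) (hf : f ≠ 0) :
    (∀ c : K, (δ : WithTop Γ) ≤ v (c - a) → omegaBall v a δ f ≤ v (f.eval c)) ∧
    (∃ c : K, (δ : WithTop Γ) ≤ v (c - a) ∧ v (f.eval c) = omegaBall v a δ f) :=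
  stmt_12_general v hv0 hv1 hmul hadd hsurj a δ f
end

section
/- Distinct balls with cut radii give inequivalent valuations: for an algebraically closed valued field K and balls B = B(a,δ), C = B(b,ε) with cuts δ, ε in Γ, if there is an isomorphism of ordered abelian groups ι: Γ(ε) → Γ(δ) restricting to the identity on Γ with ω_B = ι ∘ ω_C on K[x], then B = C. -/
/-!
The polynomial `x - c` already separates the two valuations: `ω_{a,δ}(x - c)` is the
non-standard element `x_δ` when `c ∈ B(a,δ)` and the standard element `v(c - a) ∈ Γ` otherwise.
Since `ι` is the identity on `Γ`, it cannot send a standard value to `x_δ`; being injective,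
it cannot send `x_ε` to a standard value either. Hence `x - c` has non-standard value for both
valuations or for neither.
-/

/-- The order on `Γ(δ) = ℤ·x_δ ⊕ Γ` determined by a cut `δ = (L, R)` of `Γ`, so that
`L < x_δ < R` (here `x_δ = (1,0)` and `Γ ∋ γ ↦ (0,γ)`). -/
def cutLE {Γ : Type*} [AddCommGroup Γ] [LinearOrder Γ] [IsOrderedAddMonoid Γ] (L R : Set Γ) (p q : ℤ × Γ) : Prop :=
  if p.1 = q.1 then p.2 ≤ q.2
  else if q.1 < p.1 then ∃ β ∈ R, (p.1 - q.1) • β ≤ q.2 - p.2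
  else ∃ β ∈ L, (p.1 - q.1) • β ≤ q.2 - p.2

/-- `ω` is the monomial map `ω_{a,δ}(Σ aₙ(x-a)ⁿ) = minₙ (v(aₙ) + n·x_δ)` with values in
`Γ(δ) ∪ {∞}`, the minimum taken with respect to the cut order on `Γ(δ)`. -/
def IsMonomialValCut {K : Type*} [Field K] {Γ : Type*} [AddCommGroup Γ] [LinearOrder Γ] [IsOrderedAddMonoid Γ]
    (v : K → WithTop Γ) (L R : Set Γ) (a : K)
    (ω : Polynomial K → WithTop (ℤ × Γ)) : Prop :=
  ω 0 = ⊤ ∧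
  ∀ f : Polynomial K, f ≠ 0 →
    ∃ n : ℕ, ∃ γn : Γ,
      v ((f.comp (Polynomial.X + Polynomial.C a)).coeff n) = (γn : WithTop Γ) ∧
      ω f = (((n : ℤ), γn) : ℤ × Γ) ∧
      ∀ m : ℕ, ∀ γm : Γ,
        v ((f.comp (Polynomial.X + Polynomial.C a)).coeff m) = (γm : WithTop Γ) →
        cutLE L R ((n : ℤ), γn) ((m : ℤ), γm)

open Polynomial

/-- The ball `B(a, δ)` of the cut `δ = (L, R)`. -/
def cutBall {K Γ : Type*} [Field K] [LinearOrder Γ] (v : K → WithTop Γ) (L : Set Γ) (a : K) :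
    Set K :=
  {c | ∀ γ ∈ L, (γ : WithTop Γ) < v (c - a)}

section Balls

variable {K Γ : Type*} [Field K] [AddCommGroup Γ] [LinearOrder Γ] [IsOrderedAddMonoid Γ]
  {v : K → WithTop Γ}

lemma WithTop.eq_zero_of_add_self_eq_zero {g : WithTop Γ} (h : g + g = 0) : g = 0 := by
  induction g with
  | top => simp at h
  | coe g =>
    have hg : g + g = 0 := by exact_mod_cast h
    simpa [← two_nsmul] using hg

lemma map_neg_of_map_mul (hv1 : v 1 = 0) (hmul : ∀ x y : K, v (x * y) = v x + v y) (x : K) :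
    v (-x) = v x := by
  have hm1 : v (-1) = 0 := by
    apply WithTop.eq_zero_of_add_self_eq_zero
    rw [← hmul, neg_mul_neg, one_mul, hv1]
  rw [← neg_one_mul, hmul, hm1, zero_add]

lemma cutLE_zero_one_iff (L R : Set Γ) (γ γ' : Γ) :
    cutLE L R ((0 : ℤ), γ) ((1 : ℤ), γ') ↔ ∃ β ∈ L, γ - γ' ≤ β := by
  simp [cutLE, neg_le_sub_iff_le_add, add_comm]

lemma cutLE_one_zero_iff (L R : Set Γ) (γ γ' : Γ) :
    cutLE L R ((1 : ℤ), γ) ((0 : ℤ), γ') ↔ ∃ β ∈ R, β ≤ γ' - γ := by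
  simp [cutLE]

lemma X_sub_C_comp_X_add_C (a c : K) : (X - C c).comp (X + C a) = X + C (a - c) := by
  simp only [sub_comp, X_comp, C_comp, map_sub]
  ring

/-- `ω (X - C c)` is the minimum of `v (a - c)` and `x_δ`. -/
lemma IsMonomialValCut.apply_X_sub_C_cases (hv0 : v 0 = ⊤) (hv1 : v 1 = 0) {L R : Set Γ} {a : K}
    {ω : K[X] → WithTop (ℤ × Γ)} (hω : IsMonomialValCut v L R a ω) (c : K) :
    (ω (X - C c) = (((1 : ℤ), (0 : Γ)) : ℤ × Γ) ∧
        ∀ γ : Γ, v (a - c) = γ → cutLE L R ((1 : ℤ), (0 : Γ)) ((0 : ℤ), γ)) ∨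
      ∃ γ : Γ, v (a - c) = γ ∧ ω (X - C c) = (((0 : ℤ), γ) : ℤ × Γ) ∧
        cutLE L R ((0 : ℤ), γ) ((1 : ℤ), (0 : Γ)) := by
  obtain ⟨n, γn, hvn, hωn, hmin⟩ := hω.2 (X - C c) (X_sub_C_ne_zero c)
  rw [X_sub_C_comp_X_add_C] at hvn hmin
  have hcoeff0 : (X + C (a - c)).coeff 0 = a - c := by simp
  have hcoeff1 : (X + C (a - c)).coeff 1 = 1 := by simp
  match n with
  | 0 =>
    rw [hcoeff0] at hvn
    exact .inr ⟨γn, hvn, hωn, hmin 1 0 (by rw [hcoeff1, hv1]; rfl)⟩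
  | 1 =>
    obtain rfl : γn = 0 := by
      rw [hcoeff1, hv1] at hvn
      exact_mod_cast hvn.symm
    exact .inl ⟨hωn, fun γ hγ => hmin 0 γ (by rw [hcoeff0, hγ])⟩
  | m + 2 =>
    have : (X + C (a - c)).coeff (m + 2) = 0 := by simp [coeff_X]
    rw [this, hv0] at hvn
    exact absurd hvn.symm WithTop.coe_ne_top

lemma IsMonomialValCut.mem_cutBall_iff (hv0 : v 0 = ⊤) (hv1 : v 1 = 0)
    (hmul : ∀ x y : K, v (x * y) = v x + v y) {L R : Set Γ} (hlt : ∀ l ∈ L, ∀ r ∈ R, l < r)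
    {a : K} {ω : K[X] → WithTop (ℤ × Γ)} (hω : IsMonomialValCut v L R a ω) (c : K) :
    c ∈ cutBall v L a ↔ ω (X - C c) = (((1 : ℤ), (0 : Γ)) : ℤ × Γ) := by
  have hca : v (c - a) = v (a - c) := by rw [← neg_sub, map_neg_of_map_mul hv1 hmul]
  simp only [cutBall, Set.mem_ofPred_eq, hca]
  rcases hω.apply_X_sub_C_cases hv0 hv1 c with ⟨hω1, hR⟩ | ⟨γ, hγ, hω0, hL⟩
  · refine iff_of_true (fun l hl => ?_) hω1
    induction hv : v (a - c) with
    | top => exact WithTop.coe_lt_top l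
    | coe γ =>
      obtain ⟨r, hr, hrγ⟩ := (cutLE_one_zero_iff L R 0 γ).1 (hR γ hv)
      exact WithTop.coe_lt_coe.2 ((hlt l hl r hr).trans_le (by simpa using hrγ))
  · refine iff_of_false (fun hball => ?_) (by simp [hω0])
    obtain ⟨l, hl, hγl⟩ := (cutLE_zero_one_iff L R γ 0).1 hL
    have := hball l hl
    rw [hγ, WithTop.coe_lt_coe] at this
    exact (this.trans_le (by simpa using hγl)).false

end Balls

theorem stmt_16_general {K : Type*} [Field K] {Γ : Type*}
    [AddCommGroup Γ] [LinearOrder Γ] [IsOrderedAddMonoid Γ]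
    (v : K → WithTop Γ)
    (hv0 : v 0 = ⊤) (hv1 : v 1 = 0)
    (hmul : ∀ x y : K, v (x * y) = v x + v y)
    (a b : K) (Lδ Rδ Lε Rε : Set Γ)
    (hδlt : ∀ l ∈ Lδ, ∀ r ∈ Rδ, l < r)
    (hεlt : ∀ l ∈ Lε, ∀ r ∈ Rε, l < r)
    (ωB ωC : Polynomial K → WithTop (ℤ × Γ))
    (hωB : IsMonomialValCut v Lδ Rδ a ωB)
    (hωC : IsMonomialValCut v Lε Rε b ωC)
    (ι : ℤ × Γ → ℤ × Γ)
    (hιbij : Function.Bijective ι)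
    (hιid : ∀ γ : Γ, ι ((0 : ℤ), γ) = ((0 : ℤ), γ))
    (hcomp : ∀ f : Polynomial K, ωB f = WithTop.map ι (ωC f)) :
    {c : K | ∀ γ ∈ Lδ, (γ : WithTop Γ) < v (c - a)} =
      {c : K | ∀ γ ∈ Lε, (γ : WithTop Γ) < v (c - b)} := by
  change cutBall v Lδ a = cutBall v Lε b
  ext c
  have hB := hcomp (X - C c)
  rw [hωB.mem_cutBall_iff hv0 hv1 hmul hδlt, hωC.mem_cutBall_iff hv0 hv1 hmul hεlt]
  constructor
  · intro hB1
    rcases hωC.apply_X_sub_C_cases hv0 hv1 c with ⟨hC1, -⟩ | ⟨γ, -, hC0, -⟩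
    · exact hC1
    · rw [hB1, hC0, WithTop.map_coe, hιid, WithTop.coe_inj] at hB
      simp at hB
  · intro hC1
    rcases hωB.apply_X_sub_C_cases hv0 hv1 c with ⟨hB1, -⟩ | ⟨γ, -, hB0, -⟩
    · exact hB1
    · rw [hB0, hC1, WithTop.map_coe, ← hιid γ, WithTop.coe_inj] at hB
      simpa using hιbij.1 hB

/-- Distinct balls with cut radii give inequivalent valuations: if there is an isomorphism
of ordered abelian groups `ι : Γ(ε) → Γ(δ)` restricting to the identity on `Γ` with
`ω_B = ι ∘ ω_C` on `K[x]`, then `B = B(a,δ)` and `C = B(b,ε)` coincide. -/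
theorem stmt_16 {K : Type*} [Field K] [IsAlgClosed K] {Γ : Type*}
    [AddCommGroup Γ] [LinearOrder Γ] [IsOrderedAddMonoid Γ]
    (v : K → WithTop Γ)
    (hv0 : v 0 = ⊤) (hv1 : v 1 = 0)
    (hmul : ∀ x y : K, v (x * y) = v x + v y)
    (hadd : ∀ x y : K, min (v x) (v y) ≤ v (x + y))
    (hsurj : ∀ γ : Γ, ∃ x : K, v x = (γ : WithTop Γ))
    (a b : K) (Lδ Rδ Lε Rε : Set Γ)
    (hδunion : Lδ ∪ Rδ = Set.univ) (hδlt : ∀ l ∈ Lδ, ∀ r ∈ Rδ, l < r)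
    (hεunion : Lε ∪ Rε = Set.univ) (hεlt : ∀ l ∈ Lε, ∀ r ∈ Rε, l < r)
    (ωB ωC : Polynomial K → WithTop (ℤ × Γ))
    (hωB : IsMonomialValCut v Lδ Rδ a ωB)
    (hωC : IsMonomialValCut v Lε Rε b ωC)
    (ι : ℤ × Γ → ℤ × Γ)
    (hιbij : Function.Bijective ι)
    (hιadd : ∀ p q : ℤ × Γ, ι (p + q) = ι p + ι q)
    (hιord : ∀ p q : ℤ × Γ, cutLE Lε Rε p q ↔ cutLE Lδ Rδ (ι p) (ι q))
    (hιid : ∀ γ : Γ, ι ((0 : ℤ), γ) = ((0 : ℤ), γ))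
    (hcomp : ∀ f : Polynomial K, ωB f = WithTop.map ι (ωC f)) :
    {c : K | ∀ γ ∈ Lδ, (γ : WithTop Γ) < v (c - a)} =
      {c : K | ∀ γ ∈ Lε, (γ : WithTop Γ) < v (c - b)} :=
  stmt_16_general v hv0 hv1 hmul a b Lδ Rδ Lε Rε hδlt hεlt ωB ωC hωB hωC ι hιbij hιid hcomp
end
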